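/- Let X, Y be n×m real matrices with r = rank(X), and let Z = Y X† X with singular values σᵢ^Z. The minimal Frobenius-norm error over rank-k matrices M satisfies min_{rank(M)≤k} ‖Y − M X‖_F² = Σ_{i=k+1}^{min(n,m)} (σᵢ^Z)² + ‖Y (I − X† X)‖_F². -/

import Mathlib

/-!
`Xd * X` is the orthogonal projection onto the row space of `X`, and every `M * X` lies in that
row space, so Pythagoras splits `‖Y - M X‖²` into `‖Z - M X‖² + ‖Y (1 - Xd X)‖²` with `Z = Y Xd X`.
The first term is an Eckart–Young problem for `Z` over matrices `B = M X` of rank at most `k`.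
After rotating by the singular vectors, take an orthonormal basis `W` of the kernel of `B`
(`m - k` or more columns): `‖D - B‖² ≥ ‖(D - B) W‖² = ‖D W‖² = ∑ σⱼ² (W Wᵀ)ⱼⱼ`, a weighting of
the `σⱼ²` by numbers in `[0, 1]` of total mass at least `m - k`, which is at least the tail sum
because the `σⱼ` are nonincreasing. The bound is attained by `M = U Pₖ Uᵀ Y Xd`, the truncated SVD.
-/

open Matrix

noncomputable section

/-- `Xd` is the Moore–Penrose pseudoinverse of `X` (the four Penrose conditions). -/
def IsMoorePenrose {n m : ℕ} (X : Matrix (Fin n) (Fin m) ℝ)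
    (Xd : Matrix (Fin m) (Fin n) ℝ) : Prop :=
  X * Xd * X = X ∧ Xd * X * Xd = Xd ∧ (X * Xd)ᵀ = X * Xd ∧ (Xd * X)ᵀ = Xd * X

/-- Squared Frobenius norm. -/
def frobSq {n m : ℕ} (A : Matrix (Fin n) (Fin m) ℝ) : ℝ := ∑ i, ∑ j, (A i j) ^ 2

/-- Frobenius norm. -/
def frob {n m : ℕ} (A : Matrix (Fin n) (Fin m) ℝ) : ℝ := Real.sqrt (frobSq A)

/-- Rectangular diagonal matrix with entries `σ 0, σ 1, …` on the diagonal. -/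
def rdiag (n m : ℕ) (σ : ℕ → ℝ) : Matrix (Fin n) (Fin m) ℝ :=
  Matrix.of fun i j => if (i : ℕ) = (j : ℕ) then σ (i : ℕ) else 0

/-- Rectangular diagonal matrix truncated to its first `k` diagonal entries. -/
def rdiagTrunc (n m k : ℕ) (σ : ℕ → ℝ) : Matrix (Fin n) (Fin m) ℝ :=
  Matrix.of fun i j => if (i : ℕ) = (j : ℕ) ∧ (i : ℕ) < k then σ (i : ℕ) else 0

/-- Diagonal projector onto the first `k` coordinates. -/
def dproj (n k : ℕ) : Matrix (Fin n) (Fin n) ℝ :=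
  Matrix.of fun i j => if i = j ∧ (i : ℕ) < k then (1 : ℝ) else 0

/-- `A = U * rdiag σ * Vᵀ` is a singular value decomposition of `A`:
`U`, `V` are orthogonal and the singular values `σ` are nonnegative and nonincreasing. -/
def IsSVDecomp {n m : ℕ} (A : Matrix (Fin n) (Fin m) ℝ) (U : Matrix (Fin n) (Fin n) ℝ)
    (V : Matrix (Fin m) (Fin m) ℝ) (σ : ℕ → ℝ) : Prop :=
  U * Uᵀ = 1 ∧ Uᵀ * U = 1 ∧ V * Vᵀ = 1 ∧ Vᵀ * V = 1 ∧
  (∀ i, 0 ≤ σ i) ∧ (∀ i j, i ≤ j → σ j ≤ σ i) ∧ (∀ i, min n m ≤ i → σ i = 0) ∧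
  A = U * rdiag n m σ * Vᵀ

open Finset

variable {n m p : ℕ}

theorem frobSq_nonneg (A : Matrix (Fin n) (Fin m) ℝ) : 0 ≤ frobSq A :=
  sum_nonneg fun _ _ => sum_nonneg fun _ _ => sq_nonneg _

theorem frobSq_eq_trace (A : Matrix (Fin n) (Fin m) ℝ) : frobSq A = (Aᵀ * A).trace := by
  rw [frobSq, trace, sum_comm]
  simp [mul_apply, sq]

theorem frobSq_add_of_mul_transpose_eq_zero {A B : Matrix (Fin n) (Fin m) ℝ}
    (h : A * Bᵀ = 0) : frobSq (A + B) = frobSq A + frobSq B := by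
  have hBA : (Bᵀ * A).trace = 0 := by rw [trace_mul_comm, h, trace_zero]
  have hAB : (Aᵀ * B).trace = 0 := by
    rw [← trace_transpose, transpose_mul, transpose_transpose, hBA]
  simp only [frobSq_eq_trace, transpose_add, Matrix.add_mul, Matrix.mul_add, trace_add, hAB, hBA]
  ring

theorem frobSq_mul_left_of_transpose_mul_self {U : Matrix (Fin p) (Fin n) ℝ} (hU : Uᵀ * U = 1)
    (A : Matrix (Fin n) (Fin m) ℝ) : frobSq (U * A) = frobSq A := by
  rw [frobSq_eq_trace, frobSq_eq_trace, transpose_mul, Matrix.mul_assoc, ← Matrix.mul_assoc Uᵀ,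
    hU, Matrix.one_mul]

theorem frobSq_mul_transpose_of_transpose_mul_self {W : Matrix (Fin m) (Fin p) ℝ}
    (hW : Wᵀ * W = 1) (A : Matrix (Fin n) (Fin p) ℝ) : frobSq (A * Wᵀ) = frobSq A := by
  rw [frobSq_eq_trace, frobSq_eq_trace, transpose_mul, transpose_transpose, Matrix.mul_assoc,
    trace_mul_comm, Matrix.mul_assoc, Matrix.mul_assoc, hW, Matrix.mul_one]

theorem frobSq_eq_mul_add_mul_one_sub {Q : Matrix (Fin m) (Fin m) ℝ} (hQt : Qᵀ = Q)
    (hQ : Q * Q = Q) (A : Matrix (Fin n) (Fin m) ℝ) :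
    frobSq A = frobSq (A * Q) + frobSq (A * (1 - Q)) := by
  have h : A * Q * (A * (1 - Q))ᵀ = 0 := by
    rw [transpose_mul, transpose_sub, transpose_one, hQt, Matrix.mul_assoc, ← Matrix.mul_assoc Q,
      Matrix.mul_sub, Matrix.mul_one, hQ, sub_self, Matrix.zero_mul, Matrix.mul_zero]
  rw [← frobSq_add_of_mul_transpose_eq_zero h, ← Matrix.mul_add, add_sub_cancel, Matrix.mul_one]

theorem frobSq_mul_le_of_transpose_mul_self {W : Matrix (Fin m) (Fin p) ℝ} (hW : Wᵀ * W = 1)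
    (A : Matrix (Fin n) (Fin m) ℝ) : frobSq (A * W) ≤ frobSq A := by
  have hQt : (W * Wᵀ)ᵀ = W * Wᵀ := by rw [transpose_mul, transpose_transpose]
  have hQ : W * Wᵀ * (W * Wᵀ) = W * Wᵀ := by
    rw [Matrix.mul_assoc, ← Matrix.mul_assoc Wᵀ, hW, Matrix.one_mul]
  calc frobSq (A * W) = frobSq (A * (W * Wᵀ)) := by
        rw [← Matrix.mul_assoc, frobSq_mul_transpose_of_transpose_mul_self hW]
    _ ≤ frobSq A := by
        rw [frobSq_eq_mul_add_mul_one_sub hQt hQ A]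
        exact le_add_of_nonneg_right (frobSq_nonneg _)

theorem diag_mem_Icc_of_transpose_eq_of_mul_self {P : Matrix (Fin m) (Fin m) ℝ} (hPt : Pᵀ = P)
    (hP : P * P = P) (i : Fin m) : P i i ∈ Set.Icc 0 1 := by
  have hsq : P i i = ∑ j, P i j ^ 2 := by
    calc P i i = (P * P) i i := by rw [hP]
      _ = ∑ j, P i j ^ 2 := by
        rw [mul_apply]
        refine sum_congr rfl fun j _ => ?_
        rw [← transpose_apply P i j, hPt, sq]
  have hle : P i i ^ 2 ≤ P i i := hsq ▸ single_le_sum (fun j _ => sq_nonneg (P i j)) (mem_univ i)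
  constructor <;> nlinarith [sq_nonneg (P i i)]

theorem sum_fin_ite_le_eq_sum_Ico {M : Type*} [AddCommMonoid M] (k : ℕ) (f : ℕ → M) :
    ∑ j : Fin m, (if k ≤ (j : ℕ) then f j else 0) = ∑ i ∈ Ico k m, f i := by
  rw [Fin.sum_univ_eq_sum_range (fun i => if k ≤ i then f i else 0), ← sum_filter,
    range_eq_Ico, Ico_filter_le, Nat.zero_max]

theorem sum_Ico_le_sum_mul_of_antitone {a : ℕ → ℝ} {k : ℕ} (ha : Antitone a) (hak : 0 ≤ a k)
    {c : Fin m → ℝ} (hc0 : ∀ j, 0 ≤ c j) (hc1 : ∀ j, c j ≤ 1) (hc : (m : ℝ) ≤ k + ∑ j, c j) :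
    ∑ i ∈ Ico k m, a i ≤ ∑ j : Fin m, a j * c j := by
  have hpt : ∀ j : Fin m, (if k ≤ (j : ℕ) then a j else 0) - a j * c j ≤
      a k * ((if k ≤ (j : ℕ) then 1 else 0) - c j) := by
    intro j
    split_ifs with h
    · nlinarith [ha h, hc1 j]
    · nlinarith [ha (le_of_not_ge h), hc0 j]
  have hcard : ((Ico k m).card : ℝ) ≤ ∑ j, c j := by
    rw [Nat.card_Ico]
    rcases le_total k m with hkm | hmk
    · rw [Nat.cast_sub hkm]; linarith
    · rw [Nat.sub_eq_zero_of_le hmk, Nat.cast_zero]; exact sum_nonneg fun j _ => hc0 j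
  have hsum := sum_le_sum fun j (_ : j ∈ univ) => hpt j
  rw [sum_sub_distrib, ← mul_sum, sum_sub_distrib, sum_fin_ite_le_eq_sum_Ico k a,
    sum_fin_ite_le_eq_sum_Ico k (fun _ => (1 : ℝ)), sum_const, nsmul_one] at hsum
  nlinarith [mul_le_mul_of_nonneg_left hcard hak]

theorem exists_orthonormal_kernel_basis (B : Matrix (Fin n) (Fin m) ℝ) :
    ∃ (d : ℕ) (W : Matrix (Fin m) (Fin d) ℝ), Wᵀ * W = 1 ∧ B * W = 0 ∧ m = B.rank + d := by
  let L : EuclideanSpace ℝ (Fin m) →ₗ[ℝ] (Fin n → ℝ) :=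
    B.mulVecLin ∘ₗ (WithLp.linearEquiv 2 ℝ (Fin m → ℝ)).toLinearMap
  let b := stdOrthonormalBasis ℝ (LinearMap.ker L)
  refine ⟨Module.finrank ℝ (LinearMap.ker L), of fun i j => (b j : EuclideanSpace ℝ (Fin m)) i,
    ?_, ?_, ?_⟩
  · ext j j'
    have h := orthonormal_iff_ite.mp b.orthonormal j j'
    rw [Submodule.coe_inner, PiLp.inner_apply] at h
    rw [mul_apply, one_apply, ← h]
    refine sum_congr rfl fun i _ => ?_
    simp only [transpose_apply, of_apply, RCLike.inner_apply, conj_trivial]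
    ring
  · ext i j
    have h : L (b j) = 0 := (b j).2
    exact congrFun h i
  · have h := LinearMap.finrank_range_add_finrank_ker L
    rw [finrank_euclideanSpace_fin, LinearMap.range_comp, LinearEquiv.range,
      Submodule.map_top] at h
    exact h.symm

section rdiag

variable {σ : ℕ → ℝ}

theorem rdiag_transpose_mul_rdiag (hσ : ∀ i, n ≤ i → σ i = 0) :
    (rdiag n m σ)ᵀ * rdiag n m σ = diagonal fun j : Fin m => σ j ^ 2 := by
  ext j j'
  rw [mul_apply, diagonal_apply]
  by_cases hj : (j : ℕ) < n
  · rw [sum_eq_single ⟨j, hj⟩]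
    · by_cases hjj : j = j' <;> simp [rdiag, hjj, Fin.val_inj, sq]
    · intro i _ hi
      simp [rdiag, Fin.ext_iff.not.mp hi]
    · simp
  · have hσj : σ j = 0 := hσ j (not_lt.mp hj)
    refine (sum_eq_zero fun i _ => ?_).trans (by split_ifs <;> simp [hσj])
    have : (i : ℕ) ≠ j := by omega
    simp [rdiag, this]

theorem frobSq_rdiag_mul (hσ : ∀ i, n ≤ i → σ i = 0) (A : Matrix (Fin m) (Fin p) ℝ) :
    frobSq (rdiag n m σ * A) = ∑ j : Fin m, σ j ^ 2 * (A * Aᵀ) j j := by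
  rw [frobSq_eq_trace, transpose_mul, Matrix.mul_assoc, trace_mul_comm,
    ← Matrix.mul_assoc (rdiag n m σ)ᵀ, rdiag_transpose_mul_rdiag hσ, Matrix.mul_assoc]
  simp only [trace, diag_apply, diagonal_mul]

theorem frobSq_rdiag (hσ : ∀ i, n ≤ i → σ i = 0) :
    frobSq (rdiag n m σ) = ∑ j : Fin m, σ j ^ 2 := by
  simpa using frobSq_rdiag_mul hσ (1 : Matrix (Fin m) (Fin m) ℝ)

theorem rdiag_sub_dproj_mul_rdiag (k : ℕ) :
    rdiag n m σ - dproj n k * rdiag n m σ = rdiag n m fun i => if k ≤ i then σ i else 0 := by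
  ext i j
  rw [Matrix.sub_apply, mul_apply, sum_eq_single i]
  · rcases le_or_gt k (i : ℕ) with hk | hk
    · simp [rdiag, dproj, hk, hk.not_gt]
    · simp [rdiag, dproj, hk, hk.not_ge]
  · intro l _ hl
    simp [dproj, Ne.symm hl]
  · simp

theorem sum_Ico_sq_le_frobSq_rdiag_sub {k : ℕ} (hσ : Antitone σ) (hσ0 : ∀ i, 0 ≤ σ i)
    (hσn : ∀ i, n ≤ i → σ i = 0) {B : Matrix (Fin n) (Fin m) ℝ} (hB : B.rank ≤ k) :
    ∑ i ∈ Ico k m, σ i ^ 2 ≤ frobSq (rdiag n m σ - B) := by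
  obtain ⟨d, W, hW, hBW, hdim⟩ := exists_orthonormal_kernel_basis B
  have hPt : (W * Wᵀ)ᵀ = W * Wᵀ := by rw [transpose_mul, transpose_transpose]
  have hP : W * Wᵀ * (W * Wᵀ) = W * Wᵀ := by
    rw [Matrix.mul_assoc, ← Matrix.mul_assoc Wᵀ, hW, Matrix.one_mul]
  have hmass : (m : ℝ) ≤ k + ∑ j, (W * Wᵀ) j j := by
    have htr : ∑ j, (W * Wᵀ) j j = d := by
      change (W * Wᵀ).trace = d
      rw [trace_mul_comm, hW, trace_one, Fintype.card_fin]
    rw [htr]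
    exact_mod_cast hdim.le.trans (Nat.add_le_add_right hB d)
  calc ∑ i ∈ Ico k m, σ i ^ 2
      ≤ ∑ j : Fin m, σ j ^ 2 * (W * Wᵀ) j j :=
        sum_Ico_le_sum_mul_of_antitone (fun i j hij => pow_le_pow_left₀ (hσ0 j) (hσ hij) 2)
          (sq_nonneg _) (fun j => (diag_mem_Icc_of_transpose_eq_of_mul_self hPt hP j).1)
          (fun j => (diag_mem_Icc_of_transpose_eq_of_mul_self hPt hP j).2) hmass
    _ = frobSq ((rdiag n m σ - B) * W) := by
        rw [Matrix.sub_mul, hBW, sub_zero, frobSq_rdiag_mul hσn]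
    _ ≤ frobSq (rdiag n m σ - B) := frobSq_mul_le_of_transpose_mul_self hW _

end rdiag

theorem rank_mul_dproj_mul_le (k : ℕ) (A : Matrix (Fin p) (Fin n) ℝ)
    (B : Matrix (Fin n) (Fin m) ℝ) : (A * dproj n k * B).rank ≤ k := by
  have hdiag : dproj n k = diagonal fun i : Fin n => if (i : ℕ) < k then (1 : ℝ) else 0 := by
    ext i j
    by_cases hij : i = j <;> simp [dproj, diagonal, hij]
  have hrank : (dproj n k).rank ≤ k := by
    rw [hdiag, rank_diagonal]
    simp only [ne_eq, ite_eq_right_iff, one_ne_zero, imp_false, not_not]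
    rw [Fintype.card_subtype, Fin.card_filter_val_lt]
    exact min_le_right n k
  exact (rank_mul_le_left _ _).trans ((rank_mul_le_right _ _).trans hrank)

namespace IsSVDecomp

variable {A : Matrix (Fin n) (Fin m) ℝ} {U : Matrix (Fin n) (Fin n) ℝ}
  {V : Matrix (Fin m) (Fin m) ℝ} {σ : ℕ → ℝ}

theorem frobSq_sub (h : IsSVDecomp A U V σ) (N : Matrix (Fin n) (Fin m) ℝ) :
    frobSq (A - N) = frobSq (rdiag n m σ - Uᵀ * N * V) := by
  obtain ⟨hU, hU', hV, hV', -, -, -, rfl⟩ := h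
  have hN : U * (Uᵀ * N * V) * Vᵀ = N := by
    simp only [Matrix.mul_assoc, hV, Matrix.mul_one]
    rw [← Matrix.mul_assoc, hU, Matrix.one_mul]
  have hsub : U * rdiag n m σ * Vᵀ - N = U * (rdiag n m σ - Uᵀ * N * V) * Vᵀ := by
    rw [Matrix.mul_sub, Matrix.sub_mul, hN]
  rw [hsub, frobSq_mul_transpose_of_transpose_mul_self hV',
    frobSq_mul_left_of_transpose_mul_self hU']

theorem sum_Ico_min_eq (h : IsSVDecomp A U V σ) (k : ℕ) :
    ∑ i ∈ Ico k (min n m), σ i ^ 2 = ∑ i ∈ Ico k m, σ i ^ 2 := by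
  obtain ⟨-, -, -, -, -, -, hσ, -⟩ := h
  refine sum_subset (Ico_subset_Ico_right (min_le_right n m)) fun i hi hi' => ?_
  simp only [mem_Ico] at hi hi'
  rw [hσ i (by omega), sq, mul_zero]

theorem sum_Ico_sq_le_frobSq_sub (h : IsSVDecomp A U V σ) {k : ℕ}
    {B : Matrix (Fin n) (Fin m) ℝ} (hB : B.rank ≤ k) :
    ∑ i ∈ Ico k (min n m), σ i ^ 2 ≤ frobSq (A - B) := by
  rw [h.sum_Ico_min_eq, h.frobSq_sub]
  obtain ⟨-, -, -, -, hσ0, hσ, hσn, -⟩ := h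
  have hB' : (Uᵀ * B * V).rank ≤ k :=
    (rank_mul_le_left _ _).trans ((rank_mul_le_right _ _).trans hB)
  exact sum_Ico_sq_le_frobSq_rdiag_sub hσ hσ0 (fun i hi => hσn i ((min_le_left n m).trans hi)) hB'

theorem frobSq_sub_truncation (h : IsSVDecomp A U V σ) (k : ℕ) :
    frobSq (A - U * dproj n k * Uᵀ * A) = ∑ i ∈ Ico k (min n m), σ i ^ 2 := by
  rw [h.sum_Ico_min_eq, h.frobSq_sub]
  obtain ⟨-, hU, -, hV, -, -, hσn, rfl⟩ := h
  have hUX : ∀ X : Matrix (Fin n) (Fin m) ℝ, Uᵀ * (U * X) = X := fun X => by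
    rw [← Matrix.mul_assoc, hU, Matrix.one_mul]
  have hproj : Uᵀ * (U * dproj n k * Uᵀ * (U * rdiag n m σ * Vᵀ)) * V
      = dproj n k * rdiag n m σ := by
    simp only [Matrix.mul_assoc, hUX, hV, Matrix.mul_one]
  have hτn : ∀ i, n ≤ i → (if k ≤ i then σ i else 0) = 0 := fun i hi => by
    rw [hσn i ((min_le_left n m).trans hi), ite_self]
  rw [hproj, rdiag_sub_dproj_mul_rdiag, frobSq_rdiag hτn, ← sum_fin_ite_le_eq_sum_Ico]
  simp only [ite_pow, ne_eq, OfNat.ofNat_ne_zero, not_false_eq_true, zero_pow]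

end IsSVDecomp

theorem IsMoorePenrose.frobSq_sub_mul {X : Matrix (Fin n) (Fin m) ℝ}
    {Xd : Matrix (Fin m) (Fin n) ℝ} (h : IsMoorePenrose X Xd) (Y : Matrix (Fin p) (Fin m) ℝ)
    (M : Matrix (Fin p) (Fin n) ℝ) :
    frobSq (Y - M * X) = frobSq (Y * Xd * X - M * X) + frobSq (Y * (1 - Xd * X)) := by
  obtain ⟨hX, hXd, -, hsym⟩ := h
  have hP : Xd * X * (Xd * X) = Xd * X := by rw [← Matrix.mul_assoc, hXd]
  have hXP : X * (Xd * X) = X := by rw [← Matrix.mul_assoc, hX]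
  rw [frobSq_eq_mul_add_mul_one_sub hsym hP (Y - M * X), Matrix.sub_mul, Matrix.sub_mul,
    Matrix.mul_assoc M, hXP, Matrix.mul_assoc Y, Matrix.mul_sub (M * X), Matrix.mul_one,
    Matrix.mul_assoc M, hXP, sub_self, sub_zero]

/-- with `Z = Y X† X`, the minimal squared Frobenius error over
matrices `M` of rank at most `k` equals
`Σ_{i=k+1}^{min(n,m)} (σᵢ^Z)² + ‖Y (I − X† X)‖_F²`. -/
theorem minimal_low_rank_error {n m k : ℕ}
    (X Y : Matrix (Fin n) (Fin m) ℝ) (Xd : Matrix (Fin m) (Fin n) ℝ)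
    (hXd : IsMoorePenrose X Xd)
    (Uz : Matrix (Fin n) (Fin n) ℝ) (Vz : Matrix (Fin m) (Fin m) ℝ) (σ : ℕ → ℝ)
    (hSVD : IsSVDecomp (Y * Xd * X) Uz Vz σ) :
    IsLeast {e : ℝ | ∃ M : Matrix (Fin n) (Fin n) ℝ, M.rank ≤ k ∧
        e = frobSq (Y - M * X)}
      (∑ i ∈ Finset.Ico k (min n m), σ i ^ 2 + frobSq (Y * (1 - Xd * X))) := by
  refine ⟨⟨Uz * dproj n k * (Uzᵀ * Y * Xd), rank_mul_dproj_mul_le k _ _, ?_⟩, ?_⟩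
  · have hM : Uz * dproj n k * (Uzᵀ * Y * Xd) * X = Uz * dproj n k * Uzᵀ * (Y * Xd * X) := by
      simp only [Matrix.mul_assoc]
    rw [hXd.frobSq_sub_mul, hM, hSVD.frobSq_sub_truncation]
  · rintro e ⟨M, hM, rfl⟩
    rw [hXd.frobSq_sub_mul]
    gcongr
    exact hSVD.sum_Ico_sq_le_frobSq_sub ((rank_mul_le_left _ _).trans hM)
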